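/- Lemma: Let P be a rook placement on a rectangular Ferrers board and a < b columns. If column a contains no square of P, then a←d_{a,b}(P) (the shifted sequence) is a longest decreasing sequence in P(a←d_{a,b}(P))|_{a,b}. If column b contains no square of P, then D_{a,b}(P)→b is a longest decreasing sequence in P(D_{a,b}(P)→b)|_{a,b}. -/

import Mathlib

open scoped Classical

/-- A cell (square) of the grid: `(column, row)`, both `≥ 1` for genuine cells. -/
abbrev Cell : Type := ℕ × ℕ

/-- The rectangle `R(a,b)` consisting of all cells `(i,j)` with `1 ≤ i ≤ a`, `1 ≤ j ≤ b`. -/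
def Rect (a b : ℕ) : Finset Cell := Finset.Icc 1 a ×ˢ Finset.Icc 1 b

/-- A Ferrers board (French notation): a down-left closed finite set of cells with
positive coordinates. -/
def IsFerrers (F : Finset Cell) : Prop :=
  ∀ p ∈ F, 1 ≤ p.1 ∧ 1 ≤ p.2 ∧
    ∀ q : Cell, 1 ≤ q.1 → 1 ≤ q.2 → q.1 ≤ p.1 → q.2 ≤ p.2 → q ∈ F

/-- A rook placement on a board `F`: a subset of `F` with at most one cell in each
column and at most one cell in each row. -/
def IsPlacement (F P : Finset Cell) : Prop :=
  P ⊆ F ∧ (∀ p ∈ P, ∀ q ∈ P, p.1 = q.1 → p = q) ∧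
    (∀ p ∈ P, ∀ q ∈ P, p.2 = q.2 → p = q)

/-- A decreasing sequence in `P`: columns strictly increase, rows strictly decrease. -/
def IsDecSeq (P : Finset Cell) (k : ℕ) (S : Fin k → Cell) : Prop :=
  (∀ i, S i ∈ P) ∧ ∀ i j : Fin k, i < j → (S i).1 < (S j).1 ∧ (S j).2 < (S i).2

/-- An increasing sequence in `P`: columns and rows both strictly increase. -/
def IsIncSeq (P : Finset Cell) (k : ℕ) (S : Fin k → Cell) : Prop :=
  (∀ i, S i ∈ P) ∧ ∀ i j : Fin k, i < j → (S i).1 < (S j).1 ∧ (S i).2 < (S j).2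

/-- Lexicographic comparison of two sequences of cells by their rows (values),
entry by entry from the left. -/
def rowLexLE (k : ℕ) (S T : Fin k → Cell) : Prop :=
  (∀ i, (S i).2 = (T i).2) ∨
    ∃ i : Fin k, (S i).2 < (T i).2 ∧ ∀ j : Fin k, j < i → (S j).2 = (T j).2

/-- The restriction `P|_{a,b}` of a placement to columns `a` through `b`. -/
def colRestrict (a b : ℕ) (P : Finset Cell) : Finset Cell :=
  P.filter fun p => a ≤ p.1 ∧ p.1 ≤ b

/-- The sequence obtained from `S = S₁…S_k` by the left shift towards column `a`:
`S_i` moves to the column of `S_{i-1}` for `i > 1`, and `S₁` moves to column `a`;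
rows are unchanged. -/
def shiftLSeq (a : ℕ) (k : ℕ) (S : Fin k → Cell) : Fin k → Cell := fun i =>
  (if 0 < i.1 then (S ⟨i.1 - 1, Nat.lt_of_le_of_lt (Nat.sub_le _ _) i.isLt⟩).1 else a,
    (S i).2)

/-- The sequence obtained from `S = S₁…S_k` by the right shift towards column `b`:
`S_i` moves to the column of `S_{i+1}` for `i < k`, and `S_k` moves to column `b`;
rows are unchanged. -/
def shiftRSeq (b : ℕ) (k : ℕ) (S : Fin k → Cell) : Fin k → Cell := fun i =>
  (if h : i.1 + 1 < k then (S ⟨i.1 + 1, h⟩).1 else b, (S i).2)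

/-- The left shift `P(a ← S)` of the subplacement `S` of `P` to column `a`. -/
def leftShift (a : ℕ) (k : ℕ) (S : Fin k → Cell) (P : Finset Cell) : Finset Cell :=
  (P \ Finset.image S Finset.univ) ∪ Finset.image (shiftLSeq a k S) Finset.univ

/-- The right shift `P(S → b)` of the subplacement `S` of `P` to column `b`. -/
def rightShift (b : ℕ) (k : ℕ) (S : Fin k → Cell) (P : Finset Cell) : Finset Cell :=
  (P \ Finset.image S Finset.univ) ∪ Finset.image (shiftRSeq b k S) Finset.univ

/-- `S` is a longest decreasing sequence in `P|_{a,b}`. -/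
def IsMaxDec (a b : ℕ) (P : Finset Cell) (k : ℕ) (S : Fin k → Cell) : Prop :=
  IsDecSeq (colRestrict a b P) k S ∧
    ∀ (l : ℕ) (T : Fin l → Cell), IsDecSeq (colRestrict a b P) l T → l ≤ k

/-- `S = d_{a,b}(P)`: the lexicographically value-smallest longest decreasing sequence
in `P|_{a,b}`. -/
def IsSmallestDec (a b : ℕ) (P : Finset Cell) (k : ℕ) (S : Fin k → Cell) : Prop :=
  IsMaxDec a b P k S ∧
    ∀ T : Fin k → Cell, IsDecSeq (colRestrict a b P) k T → rowLexLE k S T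

/-- `S = D_{a,b}(P)`: the lexicographically value-largest longest decreasing sequence
in `P|_{a,b}`. -/
def IsLargestDec (a b : ℕ) (P : Finset Cell) (k : ℕ) (S : Fin k → Cell) : Prop :=
  IsMaxDec a b P k S ∧
    ∀ T : Fin k → Cell, IsDecSeq (colRestrict a b P) k T → rowLexLE k T S

/-- `S` is a longest increasing sequence in `P|_{a,b}`. -/
def IsMaxInc (a b : ℕ) (P : Finset Cell) (k : ℕ) (S : Fin k → Cell) : Prop :=
  IsIncSeq (colRestrict a b P) k S ∧
    ∀ (l : ℕ) (T : Fin l → Cell), IsIncSeq (colRestrict a b P) l T → l ≤ k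

/-- `S = i_{a,b}(P)`: the lexicographically value-smallest longest increasing sequence
in `P|_{a,b}`. -/
def IsSmallestInc (a b : ℕ) (P : Finset Cell) (k : ℕ) (S : Fin k → Cell) : Prop :=
  IsMaxInc a b P k S ∧
    ∀ T : Fin k → Cell, IsIncSeq (colRestrict a b P) k T → rowLexLE k S T

/-- `S = I_{a,b}(P)`: the lexicographically value-largest longest increasing sequence
in `P|_{a,b}`. -/
def IsLargestInc (a b : ℕ) (P : Finset Cell) (k : ℕ) (S : Fin k → Cell) : Prop :=
  IsMaxInc a b P k S ∧
    ∀ T : Fin k → Cell, IsIncSeq (colRestrict a b P) k T → rowLexLE k T S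

/-!
Both halves rest on the easy half of Mirsky's theorem: a labelling of the cells of a board by
`0, …, k - 1` that gives comparable cells distinct labels bounds the length of every
decreasing sequence by `k`.

For the left shift, label the moved cell `a ← S_i` by `i` and every other cell `x` by
`k - R(x)`, where `R(x)` is the length of the longest decreasing sequence of `P|_{a,b}`
starting at `x`. A moved cell `a ← S_i` lying north-west of an unmoved cell `y` with
`R(y) = k - i` would produce the longest sequence `S₀ … S_{i-1} y …`, lexicographically
smaller than `d_{a,b}(P)`; every other comparison follows from `S` being longest.

For the right shift, label `S_i → b` by `i` and every other cell `x` by `L(x) - 1`, where `L(x)`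
counts sequences ending at `x`. The lexicographic input now enters through the fact that
`D_{a,b}(P)` is rowwise the highest of all longest decreasing sequences, which follows from
lexicographic maximality by induction on the position.
-/

def Southeast (p q : Cell) : Prop := p.1 < q.1 ∧ q.2 < p.2

instance : IsTrans Cell Southeast :=
  ⟨fun _ _ _ h₁ h₂ => ⟨h₁.1.trans h₂.1, h₂.2.trans h₁.2⟩⟩

lemma Southeast.ne {p q : Cell} (h : Southeast p q) : p ≠ q := by
  rintro rfl
  exact lt_irrefl _ h.1

def IsDecChain (F : Finset Cell) (W : List Cell) : Prop :=
  W.IsChain Southeast ∧ ∀ x ∈ W, x ∈ F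

namespace IsDecChain

variable {F : Finset Cell} {V W : List Cell}

lemma append (hV : IsDecChain F V) (hW : IsDecChain F W)
    (hlink : ∀ x ∈ V.getLast?, ∀ y ∈ W.head?, Southeast x y) : IsDecChain F (V ++ W) :=
  ⟨List.isChain_append.2 ⟨hV.1, hW.1, hlink⟩, by
    simpa only [List.mem_append, or_imp, forall_and] using ⟨hV.2, hW.2⟩⟩

lemma sublist (hW : IsDecChain F W) (h : V.Sublist W) : IsDecChain F V :=
  ⟨hW.1.sublist h, fun x hx => hW.2 x (h.subset hx)⟩

lemma singleton {x : Cell} (hx : x ∈ F) : IsDecChain F [x] :=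
  ⟨List.isChain_singleton x, by simpa using hx⟩

lemma isDecSeq_getElem (hW : IsDecChain F W) {k : ℕ} (hk : W.length = k) :
    IsDecSeq F k (fun t => W[t.1]'(by omega)) := by
  refine ⟨fun t => hW.2 _ (List.getElem_mem _), fun t u htu => ?_⟩
  exact List.pairwise_iff_getElem.1 (List.isChain_iff_pairwise.1 hW.1) _ _ _ _ htu

end IsDecChain

lemma isDecSeq_iff_isDecChain_ofFn {F : Finset Cell} {k : ℕ} {T : Fin k → Cell} :
    IsDecSeq F k T ↔ IsDecChain F (List.ofFn T) := by
  rw [IsDecChain, List.isChain_iff_pairwise, List.pairwise_ofFn, List.forall_mem_ofFn_iff,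
    and_comm]
  rfl

lemma getLast?_take_ofFn {α : Type*} {k : ℕ} (S : Fin k → α) {i : ℕ} (hi : i < k) :
    ((List.ofFn S).take (i + 1)).getLast? = some (S ⟨i, hi⟩) := by
  simp [List.getLast?_take, hi]

lemma head?_drop_ofFn {α : Type*} {k : ℕ} (S : Fin k → α) {i : ℕ} (hi : i < k) :
    ((List.ofFn S).drop i).head? = some (S ⟨i, hi⟩) := by
  simp [List.head?_drop, hi]

lemma rowLexLE.row_le {k : ℕ} {S T : Fin k → Cell} (h : rowLexLE k S T) (i : Fin k)
    (heq : ∀ j < i, S j = T j) : (S i).2 ≤ (T i).2 := by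
  rcases h with hall | ⟨i₀, hlt, hpre⟩
  · exact (hall i).le
  · rcases lt_trichotomy i₀ i with h | rfl | h
    · exact absurd (congrArg Prod.snd (heq i₀ h)) hlt.ne
    · exact hlt.le
    · exact (hpre i h).le

namespace IsDecSeq

variable {F : Finset Cell} {l k : ℕ} {T : Fin l → Cell}

lemma injective (hT : IsDecSeq F l T) : Function.Injective T := by
  intro t u htu
  by_contra hne
  rcases lt_or_gt_of_ne hne with h | h
  · exact (Southeast.ne (hT.2 t u h)) htu
  · exact (Southeast.ne (hT.2 u t h)) htu.symm

lemma southeast_succ (hT : IsDecSeq F l T) {i : ℕ} (hi : i + 1 < l) :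
    Southeast (T ⟨i, by omega⟩) (T ⟨i + 1, hi⟩) :=
  hT.2 _ _ (by simp [Fin.lt_def])

lemma length_le_of_label (hT : IsDecSeq F l T) (f : Cell → ℕ) (hf : ∀ x ∈ F, f x < k)
    (hsep : ∀ x ∈ F, ∀ y ∈ F, Southeast x y → f x ≠ f y) : l ≤ k := by
  have hinj : Function.Injective fun t => (⟨f (T t), hf _ (hT.1 t)⟩ : Fin k) := by
    intro t u htu
    by_contra hne
    rcases lt_or_gt_of_ne hne with h | h
    · exact hsep _ (hT.1 t) _ (hT.1 u) (hT.2 t u h) (Fin.mk.inj htu)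
    · exact hsep _ (hT.1 u) _ (hT.1 t) (hT.2 u t h) (Fin.mk.inj htu).symm
  simpa using Fintype.card_le_of_injective _ hinj

lemma length_le_of_extend_label {F' : Finset Cell} {S' : Fin k → Cell}
    (hT : IsDecSeq F' l T) (hS' : Function.Injective S')
    (hF' : ∀ x ∈ F', (∃ i, S' i = x) ∨ x ∈ F) (g : Cell → ℕ) (hg : ∀ x ∈ F, g x < k)
    (hFF : ∀ x ∈ F, ∀ y ∈ F, Southeast x y → g x ≠ g y)
    (hSF : ∀ i, ∀ y ∈ F, Southeast (S' i) y → (i : ℕ) ≠ g y)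
    (hFS : ∀ x ∈ F, ∀ j, Southeast x (S' j) → g x ≠ j) : l ≤ k := by
  let f := Function.extend S' (fun i => (i : ℕ)) g
  have hf_new (i : Fin k) : f (S' i) = i := hS'.extend_apply _ _ i
  have hf_old (x : Cell) (hx : ¬∃ i, S' i = x) : f x = g x := Function.extend_apply' _ _ _ hx
  refine hT.length_le_of_label f (fun x hx => ?_) (fun x hx y hy hxy => ?_)
  · by_cases hnew : ∃ i, S' i = x
    · obtain ⟨i, rfl⟩ := hnew
      simp [hf_new]
    · rw [hf_old x hnew]
      exact hg x ((hF' x hx).resolve_left hnew)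
  · by_cases hxn : ∃ i, S' i = x <;> by_cases hyn : ∃ j, S' j = y
    · obtain ⟨i, rfl⟩ := hxn
      obtain ⟨j, rfl⟩ := hyn
      rw [hf_new, hf_new, Ne, Fin.val_inj]
      rintro rfl
      exact hxy.ne rfl
    · obtain ⟨i, rfl⟩ := hxn
      rw [hf_new, hf_old y hyn]
      exact hSF i y ((hF' y hy).resolve_left hyn) hxy
    · obtain ⟨j, rfl⟩ := hyn
      rw [hf_new, hf_old x hxn]
      exact hFS x ((hF' x hx).resolve_left hxn) j hxy
    · rw [hf_old x hxn, hf_old y hyn]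
      exact hFF x ((hF' x hx).resolve_left hxn) y ((hF' y hy).resolve_left hyn) hxy

end IsDecSeq

lemma IsMaxDec.length_le {a b k : ℕ} {P : Finset Cell} {S : Fin k → Cell}
    (hS : IsMaxDec a b P k S) {W : List Cell} (hW : IsDecChain (colRestrict a b P) W) :
    W.length ≤ k :=
  hS.2 _ _ (hW.isDecSeq_getElem rfl)

lemma mem_colRestrict {a b : ℕ} {P : Finset Cell} {x : Cell} :
    x ∈ colRestrict a b P ↔ x ∈ P ∧ a ≤ x.1 ∧ x.1 ≤ b :=
  Finset.mem_filter

lemma mem_colRestrict_sdiff_union {a b k : ℕ} {P A : Finset Cell} {S' : Fin k → Cell}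
    {x : Cell} (hx : x ∈ colRestrict a b ((P \ A) ∪ Finset.image S' Finset.univ)) :
    (∃ i, S' i = x) ∨ x ∈ colRestrict a b P := by
  rw [mem_colRestrict, Finset.mem_union, Finset.mem_sdiff, Finset.mem_image] at hx
  rw [mem_colRestrict]
  obtain ⟨⟨hP, -⟩ | ⟨i, -, rfl⟩, hcol⟩ := hx
  · exact Or.inr ⟨hP, hcol⟩
  · exact Or.inl ⟨i, rfl⟩

noncomputable def longestDecFrom (F : Finset Cell) (x : Cell) : ℕ :=
  sSup {n | ∃ W, IsDecChain F (x :: W) ∧ W.length + 1 = n}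

noncomputable def longestDecTo (F : Finset Cell) (x : Cell) : ℕ :=
  sSup {n | ∃ W, IsDecChain F (W ++ [x]) ∧ W.length + 1 = n}

section LongestDec

variable {F : Finset Cell} {k : ℕ} {x : Cell} {W : List Cell}

lemma le_longestDecFrom (hF : ∀ V, IsDecChain F V → V.length ≤ k)
    (hW : IsDecChain F (x :: W)) : W.length + 1 ≤ longestDecFrom F x :=
  le_csSup ⟨k, by rintro _ ⟨V, hV, rfl⟩; exact hF _ hV⟩ ⟨W, hW, rfl⟩

lemma longestDecFrom_le (hF : ∀ V, IsDecChain F V → V.length ≤ k) :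
    longestDecFrom F x ≤ k :=
  csSup_le' (by rintro _ ⟨V, hV, rfl⟩; exact hF _ hV)

lemma exists_longestDecFrom (hF : ∀ V, IsDecChain F V → V.length ≤ k) (hx : x ∈ F) :
    ∃ W, IsDecChain F (x :: W) ∧ W.length + 1 = longestDecFrom F x :=
  Nat.sSup_mem (s := {n | ∃ W, IsDecChain F (x :: W) ∧ W.length + 1 = n})
    ⟨1, [], .singleton hx, rfl⟩ ⟨k, by rintro _ ⟨V, hV, rfl⟩; exact hF _ hV⟩

lemma le_longestDecTo (hF : ∀ V, IsDecChain F V → V.length ≤ k)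
    (hW : IsDecChain F (W ++ [x])) : W.length + 1 ≤ longestDecTo F x :=
  le_csSup ⟨k, by rintro _ ⟨V, hV, rfl⟩; simpa using hF _ hV⟩ ⟨W, hW, rfl⟩

lemma longestDecTo_le (hF : ∀ V, IsDecChain F V → V.length ≤ k) :
    longestDecTo F x ≤ k :=
  csSup_le' (by rintro _ ⟨V, hV, rfl⟩; simpa using hF _ hV)

lemma exists_longestDecTo (hF : ∀ V, IsDecChain F V → V.length ≤ k) (hx : x ∈ F) :
    ∃ W, IsDecChain F (W ++ [x]) ∧ W.length + 1 = longestDecTo F x :=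
  Nat.sSup_mem (s := {n | ∃ W, IsDecChain F (W ++ [x]) ∧ W.length + 1 = n})
    ⟨1, [], .singleton hx, rfl⟩ ⟨k, by rintro _ ⟨V, hV, rfl⟩; simpa using hF _ hV⟩

lemma one_le_longestDecFrom (hF : ∀ V, IsDecChain F V → V.length ≤ k) (hx : x ∈ F) :
    1 ≤ longestDecFrom F x :=
  le_longestDecFrom (W := []) hF (.singleton hx)

lemma one_le_longestDecTo (hF : ∀ V, IsDecChain F V → V.length ≤ k) (hx : x ∈ F) :
    1 ≤ longestDecTo F x :=
  le_longestDecTo (W := []) hF (.singleton hx)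

lemma longestDecFrom_lt_of_southeast (hF : ∀ V, IsDecChain F V → V.length ≤ k) {y : Cell}
    (hx : x ∈ F) (hy : y ∈ F) (hxy : Southeast x y) :
    longestDecFrom F y < longestDecFrom F x := by
  obtain ⟨Y, hY, hY_len⟩ := exists_longestDecFrom hF hy
  have := le_longestDecFrom (W := y :: Y) hF
    ((IsDecChain.singleton hx).append hY (by simpa using hxy))
  simp only [List.length_cons] at this
  omega

lemma longestDecTo_lt_of_southeast (hF : ∀ V, IsDecChain F V → V.length ≤ k) {y : Cell}
    (hx : x ∈ F) (hy : y ∈ F) (hxy : Southeast x y) : longestDecTo F x < longestDecTo F y := by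
  obtain ⟨X, hX, hX_len⟩ := exists_longestDecTo hF hx
  have := le_longestDecTo hF (hX.append (.singleton hy) (by simpa using hxy))
  simp only [List.length_append, List.length_singleton] at this
  omega

end LongestDec

section LeftShift

variable {a b k : ℕ} {P : Finset Cell} {S : Fin k → Cell}

lemma shiftLSeq_fst_zero (h : 0 < k) : (shiftLSeq a k S ⟨0, h⟩).1 = a := rfl

lemma shiftLSeq_fst_succ {i : ℕ} (h : i + 1 < k) :
    (shiftLSeq a k S ⟨i + 1, h⟩).1 = (S ⟨i, by omega⟩).1 := rfl

lemma isDecSeq_shiftLSeq (hfree : ∀ p ∈ P, p.1 ≠ a) (hS : IsDecSeq (colRestrict a b P) k S) :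
    IsDecSeq (colRestrict a b (leftShift a k S P)) k (shiftLSeq a k S) := by
  have hSmem (i : Fin k) := mem_colRestrict.1 (hS.1 i)
  refine ⟨fun i => mem_colRestrict.2 ⟨Finset.mem_union_right _ (Finset.mem_image_of_mem _
    (Finset.mem_univ i)), ?_⟩, fun i j hij => ⟨?_, hS.2 i j hij |>.2⟩⟩
  · rcases i with ⟨_ | i, hi⟩
    · rw [shiftLSeq_fst_zero]
      have := hSmem ⟨0, hi⟩
      omega
    · rw [shiftLSeq_fst_succ]
      exact (hSmem _).2
  · rcases i with ⟨_ | i, hi⟩ <;> rcases j with ⟨_ | j, hj⟩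
    · exact absurd hij (by simp)
    · rw [shiftLSeq_fst_zero, shiftLSeq_fst_succ]
      obtain ⟨hP, ha, -⟩ := hSmem ⟨j, by omega⟩
      exact lt_of_le_of_ne ha (hfree _ hP).symm
    · exact absurd hij (by simp [Fin.lt_def])
    · rw [shiftLSeq_fst_succ, shiftLSeq_fst_succ]
      exact (hS.2 _ _ (Fin.mk_lt_mk.2 (by simpa using hij))).1

lemma longestDecFrom_add_lt_of_shiftLSeq_southeast (hS : IsSmallestDec a b P k S)
    {i : Fin k} {y : Cell} (hy : y ∈ colRestrict a b P) (hiy : Southeast (shiftLSeq a k S i) y) :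
    longestDecFrom (colRestrict a b P) y + i < k := by
  have hbdd (V : List Cell) (hV : IsDecChain (colRestrict a b P) V) := hS.1.length_le hV
  obtain ⟨Y, hY, hYlen⟩ := exists_longestDecFrom hbdd hy
  set V := (List.ofFn S).take i ++ y :: Y
  have hV : IsDecChain (colRestrict a b P) V := by
    refine ((isDecSeq_iff_isDecChain_ofFn.1 hS.1.1).sublist (List.take_sublist _ _)).append
      hY ?_
    rcases i with ⟨_ | i, hi⟩
    · simp
    · simp only [getLast?_take_ofFn S (by omega : i < k), List.head?_cons, Option.mem_def,
        Option.some.injEq]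
      rintro _ rfl _ rfl
      refine ⟨?_, hiy.2.trans (hS.1.1.southeast_succ hi).2⟩
      rw [← shiftLSeq_fst_succ hi]
      exact hiy.1
  have hV_len : V.length = longestDecFrom (colRestrict a b P) y + i := by
    simp [V]
    omega
  rcases (hS.1.length_le hV).lt_or_eq with hlt | heq
  · omega
  · have hrow := (hS.2 _ (hV.isDecSeq_getElem heq)).row_le i (fun j hj => ?_)
    · simp [V] at hrow
      exact absurd hrow (not_le.2 hiy.2)
    · have hj' : j.1 < i.1 := hj
      simp only [V]
      rw [List.getElem_append_left (by simp; omega)]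
      simp

lemma lt_longestDecFrom_add_of_southeast_shiftLSeq (hS : IsMaxDec a b P k S) {j : Fin k}
    {x : Cell} (hx : x ∈ colRestrict a b P) (hxj : Southeast x (shiftLSeq a k S j)) :
    k < longestDecFrom (colRestrict a b P) x + j := by
  rcases j with ⟨_ | j, hj⟩
  · have := (mem_colRestrict.1 hx).2.1
    have := hxj.1
    rw [shiftLSeq_fst_zero] at this
    omega
  · have hchain : IsDecChain (colRestrict a b P) (x :: (List.ofFn S).drop (j + 1)) := by
      refine (IsDecChain.singleton hx).append
        ((isDecSeq_iff_isDecChain_ofFn.1 hS.1).sublist (List.drop_sublist _ _)) ?_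
      simp only [head?_drop_ofFn S hj, List.getLast?_singleton, Option.mem_def,
        Option.some.injEq]
      rintro _ rfl _ rfl
      refine ⟨lt_trans ?_ (hS.1.southeast_succ hj).1, hxj.2⟩
      rw [← shiftLSeq_fst_succ hj]
      exact hxj.1
    have := le_longestDecFrom (fun V hV => hS.length_le hV) hchain
    simp only [List.length_drop, List.length_ofFn] at this
    show k < _ + (j + 1)
    omega

theorem isMaxDec_leftShift (hfree : ∀ p ∈ P, p.1 ≠ a) (hS : IsSmallestDec a b P k S) :
    IsMaxDec a b (leftShift a k S P) k (shiftLSeq a k S) := by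
  have hbdd (V : List Cell) (hV : IsDecChain (colRestrict a b P) V) := hS.1.length_le hV
  have hS' := isDecSeq_shiftLSeq hfree hS.1.1
  refine ⟨hS', fun l T hT => hT.length_le_of_extend_label hS'.injective
    (fun x hx => mem_colRestrict_sdiff_union hx)
    (fun x => k - longestDecFrom (colRestrict a b P) x) ?_ ?_ ?_ ?_⟩
  · intro x hx
    have := one_le_longestDecFrom hbdd hx
    have := longestDecFrom_le hbdd (x := x)
    omega
  · intro x hx y hy hxy
    have := longestDecFrom_lt_of_southeast hbdd hx hy hxy
    have := longestDecFrom_le hbdd (x := x)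
    omega
  · intro i y hy hiy
    have := longestDecFrom_add_lt_of_shiftLSeq_southeast hS hy hiy
    omega
  · intro x hx j hxj
    have := lt_longestDecFrom_add_of_southeast_shiftLSeq hS.1 hx hxj
    have := longestDecFrom_le hbdd (x := x)
    omega

end LeftShift

theorem IsLargestDec.row_le {a b k : ℕ} {P : Finset Cell} {S : Fin k → Cell}
    (hS : IsLargestDec a b P k S) {Z : Fin k → Cell} (hZ : IsDecSeq (colRestrict a b P) k Z)
    (j : Fin k) : (Z j).2 ≤ (S j).2 := by
  obtain ⟨j, hj⟩ := j
  induction j using Nat.strong_induction_on with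
  | _ j ih =>
  by_contra! hlt
  have hSc := isDecSeq_iff_isDecChain_ofFn.1 hS.1.1
  have hZc := isDecSeq_iff_isDecChain_ofFn.1 hZ
  -- otherwise `Z₀ … Z_j S_j … S_{k-1}` would be a decreasing sequence of length `k + 1`
  have hcol : (S ⟨j, hj⟩).1 ≤ (Z ⟨j, hj⟩).1 := by
    by_contra! hcol
    have hlong := hS.1.length_le ((hZc.sublist (List.take_sublist (j + 1) _)).append
      (hSc.sublist (List.drop_sublist j _)) ?_)
    · simp only [List.length_append, List.length_take, List.length_drop, List.length_ofFn]
        at hlong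
      omega
    · simp only [getLast?_take_ofFn Z hj, head?_drop_ofFn S hj, Option.mem_def,
        Option.some.injEq]
      rintro _ rfl _ rfl
      exact ⟨hcol, hlt⟩
  have hlink : ∀ x ∈ ((List.ofFn S).take j).getLast?, ∀ y ∈ ((List.ofFn Z).drop j).head?,
      Southeast x y := by
    rcases j with _ | j
    · simp
    simp only [getLast?_take_ofFn S (Nat.lt_of_succ_lt hj), head?_drop_ofFn Z hj,
      Option.mem_def, Option.some.injEq]
    rintro _ rfl _ rfl
    exact ⟨(hS.1.1.southeast_succ hj).1.trans_le hcol,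
      (hZ.southeast_succ hj).2.trans_le (ih j (by omega) _)⟩
  -- `S₀ … S_{j-1} Z_j … Z_{k-1}` is longest and agrees with `S` before `j`
  set V := (List.ofFn S).take j ++ (List.ofFn Z).drop j
  have hV : IsDecChain (colRestrict a b P) V :=
    (hSc.sublist (List.take_sublist _ _)).append (hZc.sublist (List.drop_sublist _ _)) hlink
  have hV_len : V.length = k := by
    simp [V]
    omega
  have hrow := (hS.2 _ (hV.isDecSeq_getElem hV_len)).row_le ⟨j, hj⟩ (fun i hi => ?_)
  · simp [V, hj.le] at hrow
    omega
  · have hi' : i.1 < j := hi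
    simp only [V]
    rw [List.getElem_append_left (by simp; omega)]
    simp

section RightShift

variable {a b k : ℕ} {P : Finset Cell} {S : Fin k → Cell}

lemma shiftRSeq_fst_of_lt {i : Fin k} (h : i.1 + 1 < k) :
    (shiftRSeq b k S i).1 = (S ⟨i + 1, h⟩).1 :=
  dif_pos h

lemma shiftRSeq_fst_of_not_lt {i : Fin k} (h : ¬i.1 + 1 < k) : (shiftRSeq b k S i).1 = b :=
  dif_neg h

lemma isDecSeq_shiftRSeq (hfree : ∀ p ∈ P, p.1 ≠ b) (hS : IsDecSeq (colRestrict a b P) k S) :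
    IsDecSeq (colRestrict a b (rightShift b k S P)) k (shiftRSeq b k S) := by
  have hSmem (i : Fin k) := mem_colRestrict.1 (hS.1 i)
  refine ⟨fun i => mem_colRestrict.2 ⟨Finset.mem_union_right _ (Finset.mem_image_of_mem _
    (Finset.mem_univ i)), ?_⟩, fun i j hij => ⟨?_, hS.2 i j hij |>.2⟩⟩
  · by_cases hi : i.1 + 1 < k
    · rw [shiftRSeq_fst_of_lt hi]
      exact (hSmem _).2
    · rw [shiftRSeq_fst_of_not_lt hi]
      have := hSmem i
      omega
  · have hij' : i.1 < j.1 := hij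
    have hi : i.1 + 1 < k := by omega
    rw [shiftRSeq_fst_of_lt hi]
    by_cases hj : j.1 + 1 < k
    · rw [shiftRSeq_fst_of_lt hj]
      exact (hS.2 _ _ (Fin.mk_lt_mk.2 (by omega))).1
    · rw [shiftRSeq_fst_of_not_lt hj]
      obtain ⟨hP, -, hb⟩ := hSmem ⟨i + 1, hi⟩
      exact lt_of_le_of_ne hb (hfree _ hP)

lemma add_two_le_longestDecTo_of_shiftRSeq_southeast (hS : IsMaxDec a b P k S) {i : Fin k}
    {y : Cell} (hy : y ∈ colRestrict a b P) (hiy : Southeast (shiftRSeq b k S i) y) :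
    i + 2 ≤ longestDecTo (colRestrict a b P) y := by
  have hi : i.1 + 1 < k := by
    by_contra hi
    have := hiy.1
    rw [shiftRSeq_fst_of_not_lt hi] at this
    have := (mem_colRestrict.1 hy).2.2
    omega
  have hchain : IsDecChain (colRestrict a b P) ((List.ofFn S).take (i + 1) ++ [y]) := by
    refine ((isDecSeq_iff_isDecChain_ofFn.1 hS.1).sublist (List.take_sublist _ _)).append
      (.singleton hy) ?_
    simp only [getLast?_take_ofFn S i.2, List.head?_cons, Option.mem_def, Option.some.injEq]
    rintro _ rfl _ rfl
    refine ⟨lt_trans (hS.1.southeast_succ hi).1 ?_, hiy.2⟩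
    rw [← shiftRSeq_fst_of_lt hi]
    exact hiy.1
  have := le_longestDecTo (fun V hV => hS.length_le hV) hchain
  simp only [List.length_take, List.length_ofFn] at this
  omega

lemma longestDecTo_ne_of_southeast_shiftRSeq (hS : IsLargestDec a b P k S) {j : Fin k}
    {x : Cell} (hx : x ∈ colRestrict a b P) (hxj : Southeast x (shiftRSeq b k S j)) :
    longestDecTo (colRestrict a b P) x ≠ j + 1 := by
  intro hLx
  obtain ⟨W, hW, hW_len⟩ := exists_longestDecTo (fun V hV => hS.1.length_le hV) hx
  have hZ : IsDecChain (colRestrict a b P) (W ++ [x] ++ (List.ofFn S).drop (j + 1)) := by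
    refine hW.append ((isDecSeq_iff_isDecChain_ofFn.1 hS.1.1).sublist (List.drop_sublist _ _)) ?_
    by_cases hj : j.1 + 1 < k
    · simp only [List.getLast?_concat, head?_drop_ofFn S hj, Option.mem_def, Option.some.injEq]
      rintro _ rfl _ rfl
      refine ⟨?_, (hS.1.1.southeast_succ hj).2.trans hxj.2⟩
      rw [← shiftRSeq_fst_of_lt hj]
      exact hxj.1
    · simp [hj]
  have hZ_len : (W ++ [x] ++ (List.ofFn S).drop (j + 1)).length = k := by
    simp
    omega
  have hrow := hS.row_le (hZ.isDecSeq_getElem hZ_len) j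
  have hZj : (W ++ [x] ++ (List.ofFn S).drop (j + 1))[j.1]'(by omega) = x := by
    rw [List.getElem_append_left (by simp; omega), List.getElem_append_right (by omega)]
    simp only [List.getElem_singleton]
  simp only [hZj] at hrow
  exact absurd hxj.2 hrow.not_gt

theorem isMaxDec_rightShift (hfree : ∀ p ∈ P, p.1 ≠ b) (hS : IsLargestDec a b P k S) :
    IsMaxDec a b (rightShift b k S P) k (shiftRSeq b k S) := by
  have hbdd (V : List Cell) (hV : IsDecChain (colRestrict a b P) V) := hS.1.length_le hV
  have hS' := isDecSeq_shiftRSeq hfree hS.1.1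
  refine ⟨hS', fun l T hT => hT.length_le_of_extend_label hS'.injective
    (fun x hx => mem_colRestrict_sdiff_union hx)
    (fun x => longestDecTo (colRestrict a b P) x - 1) ?_ ?_ ?_ ?_⟩
  · intro x hx
    have := one_le_longestDecTo hbdd hx
    have := longestDecTo_le hbdd (x := x)
    omega
  · intro x hx y hy hxy
    have := longestDecTo_lt_of_southeast hbdd hx hy hxy
    have := one_le_longestDecTo hbdd hx
    omega
  · intro i y hy hiy
    have := add_two_le_longestDecTo_of_shiftRSeq_southeast hS.1 hy hiy
    omega
  · intro x hx j hxj
    have := longestDecTo_ne_of_southeast_shiftRSeq hS hx hxj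
    have := one_le_longestDecTo hbdd hx
    omega

end RightShift

theorem shifted_is_longest_general (P : Finset Cell) (a b : ℕ) (k : ℕ) (S : Fin k → Cell) :
    (((∀ p ∈ P, p.1 ≠ a) ∧ IsSmallestDec a b P k S) →
      IsMaxDec a b (leftShift a k S P) k (shiftLSeq a k S)) ∧
    (((∀ p ∈ P, p.1 ≠ b) ∧ IsLargestDec a b P k S) →
      IsMaxDec a b (rightShift b k S P) k (shiftRSeq b k S)) :=
  ⟨fun ⟨hfree, hS⟩ => isMaxDec_leftShift hfree hS,
    fun ⟨hfree, hS⟩ => isMaxDec_rightShift hfree hS⟩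

/-- **Lemma.** If column `a` holds no cell of `P`, then `a ← d_{a,b}(P)` is a longest
decreasing sequence in `P(a ← d_{a,b}(P))|_{a,b}`; if column `b` holds no cell of `P`,
then `D_{a,b}(P) → b` is a longest decreasing sequence in `P(D_{a,b}(P) → b)|_{a,b}`. -/
theorem shifted_is_longest (m n : ℕ) (P : Finset Cell) (hP : IsPlacement (Rect m n) P)
    (a b : ℕ) (ha1 : 1 ≤ a) (hab : a < b) (hbm : b ≤ m)
    (k : ℕ) (S : Fin k → Cell) :
    (((∀ p ∈ P, p.1 ≠ a) ∧ IsSmallestDec a b P k S) →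
      IsMaxDec a b (leftShift a k S P) k (shiftLSeq a k S)) ∧
    (((∀ p ∈ P, p.1 ≠ b) ∧ IsLargestDec a b P k S) →
      IsMaxDec a b (rightShift b k S P) k (shiftRSeq b k S)) :=
  shifted_is_longest_general P a b k S
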